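/- Let x = α₁…αₜ be a word over {a,b} with all prefixes of nonnegative φ-value, where φ(a)=2, φ(b)=−2. If x′ is obtained from x by any finite sequence of type 1 operations (delete an a and a later b) and type 2 operations (swap adjacent letters α_iα_{i+1} with α_i = a or α_{i+1} = b), then w(x′) ≤ w(x). -/

import Mathlib

/-- A word over the alphabet {a,b} is a list of booleans: `true` = a, `false` = b. -/
abbrev Word := List Bool

/-- φ(a) = 2, φ(b) = -2, extended additively to words. -/
def phi (y : Word) : ℤ := (y.map (fun c => if c then (2 : ℤ) else -2)).sum

/-- The width of a word: the sum of φ over all nonempty prefixes. -/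
def wd (y : Word) : ℤ := ∑ i ∈ Finset.range y.length, phi (y.take (i + 1))

/-- A type 1 operation: delete an occurrence of a and a strictly later occurrence of b. -/
def Type1 (y y' : Word) : Prop :=
  ∃ u v z : Word, y = u ++ [true] ++ v ++ [false] ++ z ∧ y' = u ++ v ++ z

/-- A type 2 operation: swap two adjacent letters αᵢαᵢ₊₁ with αᵢ = a or αᵢ₊₁ = b. -/
def Type2 (y y' : Word) : Prop :=
  ∃ (u v : Word) (c d : Bool), (c = true ∨ d = false) ∧
    y = u ++ [c, d] ++ v ∧ y' = u ++ [d, c] ++ v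

/-!
Replace the width by the *positive-part width* `∑ max (φ(prefix)) 0`. It dominates the width and
agrees with it on words whose prefixes are all nonnegative. Unlike the width it cannot increase under
either operation: deleting `a … b` lowers by 2 exactly the prefixes between the two letters and
removes two prefixes, and a swap `cd ↦ dc` with `φ(d) ≤ φ(c)` lowers one prefix and leaves the
others unchanged. As `max · 0` is monotone, neither step increases any positive part.
-/

open Finset

/-- The positive-part width of `y` read after a prefix of height `c`. -/
def posWidth (c : ℤ) (y : Word) : ℤ :=
  ∑ i ∈ range y.length, max (c + phi (y.take (i + 1))) 0

lemma phi_append (u v : Word) : phi (u ++ v) = phi u + phi v := by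
  simp [phi]

lemma phi_singleton_true : phi [true] = 2 := by
  simp [phi]

lemma phi_singleton_false : phi [false] = -2 := by
  simp [phi]

lemma posWidth_append (c : ℤ) (u v : Word) :
    posWidth c (u ++ v) = posWidth c u + posWidth (c + phi u) v := by
  rw [posWidth, List.length_append, sum_range_add]
  congr 1
  · refine sum_congr rfl fun i hi => ?_
    rw [List.take_append_of_le_length (by simpa using hi)]
  · refine sum_congr rfl fun j _ => ?_
    rw [add_assoc u.length j 1, List.take_length_add_append, phi_append, add_assoc]

lemma posWidth_singleton (c : ℤ) (d : Bool) : posWidth c [d] = max (c + phi [d]) 0 := by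
  simp [posWidth]

lemma posWidth_mono (y : Word) : Monotone (posWidth · y) := fun _ _ h =>
  sum_le_sum fun _ _ => max_le_max (by omega) le_rfl

lemma posWidth_le_of_type1 {y y' : Word} (h : Type1 y y') : posWidth 0 y' ≤ posWidth 0 y := by
  obtain ⟨u, v, z, rfl, rfl⟩ := h
  simp only [posWidth_append, posWidth_singleton, phi_append, phi_singleton_true,
    phi_singleton_false, zero_add]
  have hv : posWidth (phi u) v ≤ posWidth (phi u + 2) v := posWidth_mono v (by omega)
  have hz : phi u + 2 + phi v + -2 = phi u + phi v := by ring
  rw [hz]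
  linarith [le_max_right (phi u + 2) 0, le_max_right (phi u + phi v) 0]

lemma posWidth_le_of_type2 {y y' : Word} (h : Type2 y y') : posWidth 0 y' ≤ posWidth 0 y := by
  obtain ⟨u, v, c, d, hcd, rfl, rfl⟩ := h
  have hdc : phi [d] ≤ phi [c] := by
    cases c <;> cases d <;> simp_all [phi_singleton_true, phi_singleton_false]
  have hpair (e f : Bool) : [e, f] = [e] ++ [f] := rfl
  simp only [hpair, posWidth_append, posWidth_singleton, phi_append, zero_add]
  have hfirst : max (phi u + phi [d]) 0 ≤ max (phi u + phi [c]) 0 :=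
    max_le_max (by omega) le_rfl
  have hswap : phi u + phi [d] + phi [c] = phi u + phi [c] + phi [d] := by ring
  have hrest : phi u + (phi [d] + phi [c]) = phi u + (phi [c] + phi [d]) := by ring
  rw [hswap, hrest]
  linarith

lemma wd_le_posWidth (y : Word) : wd y ≤ posWidth 0 y :=
  sum_le_sum fun _ _ => by simp

lemma wd_eq_posWidth_of_prefix_nonneg {y : Word} (hpre : ∀ i, 0 ≤ phi (y.take i)) :
    wd y = posWidth 0 y :=
  sum_congr rfl fun i _ => by simp [max_eq_left (hpre (i + 1))]

theorem operations_monotone (x x' : Word)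
    (hpre : ∀ i, 0 ≤ phi (x.take i))
    (h : Relation.ReflTransGen (fun y y' => Type1 y y' ∨ Type2 y y') x x') :
    wd x' ≤ wd x := by
  have hpos : posWidth 0 x' ≤ posWidth 0 x := by
    induction h with
    | refl => exact le_rfl
    | tail _ hstep ih =>
      rcases hstep with h1 | h2
      · exact (posWidth_le_of_type1 h1).trans ih
      · exact (posWidth_le_of_type2 h2).trans ih
  calc wd x' ≤ posWidth 0 x' := wd_le_posWidth x'
    _ ≤ posWidth 0 x := hpos
    _ = wd x := (wd_eq_posWidth_of_prefix_nonneg hpre).symm
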